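/- Let n ≥ 3 be odd and let x* ∈ {0,1}ⁿ be any input appearing in the n-party Mermin inequality, i.e., Σᵢ x*ᵢ = n − 2k* for some nonnegative integer k*. Then there exists an n-party box P with binary inputs and outputs and an output string a* ∈ {0,1}ⁿ such that: (i) P satisfies the contiguous-subset relativistic causality constraints; (ii) P maximally violates the Mermin inequality, i.e., for every x ∈ {0,1}ⁿ with Σᵢ xᵢ = n − 2k (k a nonnegative integer), the n-party correlator ⟨x⟩ := Σ_{a∈{0,1}ⁿ} (−1)^{a₁⊕⋯⊕aₙ} P(a|x) equals (−1)^k; and (iii) P(a*|x*) = 1, i.e., the output on input x* is deterministic. -/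

import Mathlib

/-!
The box runs one of two deterministic strategies, selected by a uniformly random shared bit `r`.
A party whose input agrees with `x*` outputs `a*ᵢ`; the parties whose inputs differ from `x*`
are ranked along the line, and the one of rank `ρ` outputs `a*ᵢ ⊕ x*ᵢ ⊕ r ⊕ (ρ mod 2)`. On `x*`
the output is `a*`. For a Mermin input `x`, the number `D` of flipped parties is even and the
ranks contribute `D (D + 1) / 2 ≡ D / 2`; together with the flipped bits `x*ᵢ` this is exactly the
change from `k*` to `k`, so if `a*` has `k*` ones then every output has parity `k` and the
correlator is `(-1)^k`. Two inputs that agree on a contiguous window have, inside the window,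
ranks differing by a constant, and relabelling `r` absorbs that constant: window marginals do
not see the outside inputs.
-/

open Finset

section UniformMixture

variable {X R α : Type*} [Fintype R] [DecidableEq α]

noncomputable def uniformMixture (A : X → R → α) (x : X) (a : α) : ℝ :=
  ∑ r, if A x r = a then (Fintype.card R : ℝ)⁻¹ else 0

variable (A : X → R → α) (x : X)

lemma uniformMixture_nonneg (a : α) : 0 ≤ uniformMixture A x a :=
  sum_nonneg fun _ _ => by positivity

lemma sum_mul_uniformMixture [Fintype α] (f : α → ℝ) :
    ∑ a, f a * uniformMixture A x a = (Fintype.card R : ℝ)⁻¹ * ∑ r, f (A x r) := by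
  simp only [uniformMixture, mul_sum, mul_ite, mul_zero]
  rw [sum_comm]
  simp [mul_comm]

lemma sum_finset_uniformMixture (s : Finset α) :
    ∑ a ∈ s, uniformMixture A x a = ∑ r, if A x r ∈ s then (Fintype.card R : ℝ)⁻¹ else 0 := by
  simp only [uniformMixture]
  rw [sum_comm]
  simp

lemma sum_uniformMixture [Fintype α] [Nonempty R] : ∑ a, uniformMixture A x a = 1 := by
  simp [sum_finset_uniformMixture]

lemma uniformMixture_eq_one [Nonempty R] {a : α} (h : ∀ r, A x r = a) :
    uniformMixture A x a = 1 := by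
  simp [uniformMixture, h]

lemma sum_finset_uniformMixture_eq_of_perm {x' : X} {s : Finset α} (σ : Equiv.Perm R)
    (h : ∀ r, A x r ∈ s ↔ A x' (σ r) ∈ s) :
    ∑ a ∈ s, uniformMixture A x a = ∑ a ∈ s, uniformMixture A x' a := by
  simp only [sum_finset_uniformMixture, h]
  exact Equiv.sum_comp σ fun r => if A x' r ∈ s then (Fintype.card R : ℝ)⁻¹ else 0

end UniformMixture

lemma two_mul_sum_card_filter_le {ι : Type*} [LinearOrder ι] (F : Finset ι) :
    2 * ∑ i ∈ F, #{j ∈ F | j ≤ i} = F.card * (F.card + 1) := by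
  induction F using Finset.induction_on_max with
  | empty => simp
  | insert a s hlt ih =>
    have ha : a ∉ s := fun h => lt_irrefl a (hlt a h)
    have htop : {j ∈ insert a s | j ≤ a} = insert a s :=
      filter_true_of_mem fun j hj => by
        rcases mem_insert.1 hj with rfl | hj
        exacts [le_rfl, (hlt j hj).le]
    have hrest : ∀ i ∈ s, #{j ∈ insert a s | j ≤ i} = #{j ∈ s | j ≤ i} := fun i hi => by
      rw [filter_insert, if_neg (not_le.2 (hlt i hi))]
    rw [sum_insert ha, htop, sum_congr rfl hrest, card_insert_of_notMem ha, mul_add, ih]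
    ring

lemma Nat.ModEq.neg_one_pow {R : Type*} [Ring R] {a b : ℕ} (h : a ≡ b [MOD 2]) :
    (-1 : R) ^ a = (-1) ^ b := by
  rw [neg_one_pow_eq_pow_mod_two, h, ← neg_one_pow_eq_pow_mod_two]

def Bool.toZModTwo (b : Bool) : ZMod 2 := if b then 1 else 0

lemma Bool.toZModTwo_xor (a b : Bool) : (a ^^ b).toZModTwo = a.toZModTwo + b.toZModTwo := by
  cases a <;> cases b <;> decide

lemma Nat.toZModTwo_bodd (t : ℕ) : t.bodd.toZModTwo = t := by
  induction t with
  | zero => rfl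
  | succ t ih =>
    rw [Nat.bodd_succ, show (!t.bodd) = (t.bodd ^^ true) by simp, Bool.toZModTwo_xor, ih]
    push_cast
    rfl

lemma natCast_card_filter_eq_sum_toZModTwo {ι : Type*} (s : Finset ι) (b : ι → Bool) :
    (#{i ∈ s | b i} : ZMod 2) = ∑ i ∈ s, (b i).toZModTwo := by
  simp [Bool.toZModTwo, sum_boole]

section Flips

variable {ι : Type*} [Fintype ι] (y : ι → Bool)

def flips (x : ι → Bool) : Finset ι := {i | x i ≠ y i}

lemma card_filter_add_two_mul_card_flips_filter (x : ι → Bool) :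
    #{i | x i} + 2 * #{i ∈ flips y x | y i} = #{i | y i} + #(flips y x) := by
  simp only [flips, card_filter, sum_filter, mul_sum, ← sum_add_distrib]
  exact sum_congr rfl fun i _ => by cases x i <;> cases y i <;> rfl

end Flips

section MerminStrategy

variable {n : ℕ} (xstar astar : Fin n → Bool)

def flipRank (x : Fin n → Bool) (i : Fin n) : ℕ := #{j ∈ flips xstar x | j ≤ i}

def flipsBefore (x : Fin n → Bool) (m : ℕ) : ℕ := #{j ∈ flips xstar x | j.val < m}

def merminStrategy (x : Fin n → Bool) (r : Bool) (i : Fin n) : Bool :=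
  if x i = xstar i then astar i else astar i ^^ xstar i ^^ r ^^ (flipRank xstar x i).bodd

lemma merminStrategy_self (r : Bool) : merminStrategy xstar astar xstar r = astar := by
  funext i
  simp [merminStrategy]

lemma toZModTwo_merminStrategy (x : Fin n → Bool) (r : Bool) (i : Fin n) :
    (merminStrategy xstar astar x r i).toZModTwo = (astar i).toZModTwo +
      if i ∈ flips xstar x then (xstar i).toZModTwo + r.toZModTwo + flipRank xstar x i
      else 0 := by
  by_cases h : x i = xstar i
  · simp [merminStrategy, flips, h]
  · simp only [merminStrategy, flips, h, if_false, mem_filter, mem_univ, true_and, ne_eq,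
      not_false_eq_true, if_true, Bool.toZModTwo_xor, Nat.toZModTwo_bodd]
    ring

lemma natCast_card_merminStrategy (x : Fin n → Bool) (r : Bool) :
    (#{i | merminStrategy xstar astar x r i} : ZMod 2) = #{i | astar i} +
      #{i ∈ flips xstar x | xstar i} + #(flips xstar x) * r.toZModTwo +
      ∑ i ∈ flips xstar x, flipRank xstar x i := by
  simp only [natCast_card_filter_eq_sum_toZModTwo, toZModTwo_merminStrategy, sum_add_distrib,
    ← sum_filter, Nat.cast_sum, sum_const, nsmul_eq_mul, filter_univ_mem]
  ring

variable {xstar astar} {m len : ℕ} {x x' : Fin n → Bool}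

lemma card_merminStrategy_modEq {k kstar : ℕ} (hastar : #{i | astar i} = kstar)
    (hx : #{i | x i} + 2 * k = n) (hxstar : #{i | xstar i} + 2 * kstar = n) (r : Bool) :
    #{i | merminStrategy xstar astar x r i} ≡ k [MOD 2] := by
  have hcount := card_filter_add_two_mul_card_flips_filter xstar x
  obtain ⟨d, hd⟩ : ∃ d, #(flips xstar x) = 2 * d := ⟨#(flips xstar x) / 2, by omega⟩
  have hrank : ∑ i ∈ flips xstar x, flipRank xstar x i = d * (2 * d + 1) := by
    have hgauss := two_mul_sum_card_filter_le (flips xstar x)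
    rw [hd] at hgauss
    simp only [flipRank]
    linarith
  have hk : ((kstar + #{i ∈ flips xstar x | xstar i} : ℕ) : ZMod 2) = (k + d : ℕ) :=
    congrArg Nat.cast (by omega)
  have h2 : (2 : ZMod 2) = 0 := rfl
  rw [← ZMod.natCast_eq_natCast_iff, natCast_card_merminStrategy, hrank, hd, hastar]
  push_cast at hk ⊢
  linear_combination hk + (d * r.toZModTwo + d * d + d) * h2

lemma flipRank_eq_flipsBefore_add (x : Fin n → Bool) {i : Fin n} (hmi : m ≤ i.val) :
    flipRank xstar x i = flipsBefore xstar x m + #{j ∈ flips xstar x | m ≤ j.val ∧ j ≤ i} := by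
  rw [flipRank, flipsBefore, ← card_filter_add_card_filter_not (fun j : Fin n => j.val < m),
    filter_filter, filter_filter]
  congr 2 <;> refine filter_congr fun j _ => ?_ <;> rw [Fin.le_def] <;> omega

lemma flipRank_add_flipsBefore_eq_of_eqOn_window
    (hx : ∀ i : Fin n, m ≤ i.val → i.val < m + len → x i = x' i)
    {i : Fin n} (hmi : m ≤ i.val) (hil : i.val < m + len) :
    flipRank xstar x i + flipsBefore xstar x' m = flipRank xstar x' i + flipsBefore xstar x m := by
  have hwindow : {j ∈ flips xstar x | m ≤ j.val ∧ j ≤ i}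
      = {j ∈ flips xstar x' | m ≤ j.val ∧ j ≤ i} := by
    ext j
    simp only [flips, mem_filter, mem_univ, true_and, Fin.le_def]
    constructor <;> rintro ⟨hj, hmj, hji⟩ <;> refine ⟨?_, hmj, hji⟩
    · rwa [← hx j hmj (by omega)]
    · rwa [hx j hmj (by omega)]
  rw [flipRank_eq_flipsBefore_add x hmi, flipRank_eq_flipsBefore_add x' hmi, hwindow]
  ring

lemma merminStrategy_eq_of_eqOn_window
    (hx : ∀ i : Fin n, m ≤ i.val → i.val < m + len → x i = x' i) (r : Bool)
    {i : Fin n} (hmi : m ≤ i.val) (hil : i.val < m + len) :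
    merminStrategy xstar astar x r i = merminStrategy xstar astar x'
      (r ^^ ((flipsBefore xstar x m).bodd ^^ (flipsBefore xstar x' m).bodd)) i := by
  have hpar : (flipRank xstar x i).bodd = ((flipRank xstar x' i).bodd ^^
      ((flipsBefore xstar x m).bodd ^^ (flipsBefore xstar x' m).bodd)) := by
    have h := congrArg Nat.bodd
      (flipRank_add_flipsBefore_eq_of_eqOn_window (xstar := xstar) hx hmi hil)
    rw [Nat.bodd_add, Nat.bodd_add] at h
    rw [← Bool.xor_assoc, ← h, Bool.xor_assoc, Bool.xor_self, Bool.xor_false]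
  simp only [merminStrategy, hx i hmi hil, hpar]
  split_ifs
  · rfl
  · simp only [Bool.xor_assoc, Bool.xor_comm, Bool.xor_left_comm]

lemma sum_filter_uniformMixture_merminStrategy_eq_of_eqOn_window
    (hx : ∀ i : Fin n, m ≤ i.val → i.val < m + len → x i = x' i) (aS : Fin n → Bool) :
    ∑ a ∈ univ.filter
        (fun a : Fin n → Bool => ∀ i : Fin n, m ≤ i.val → i.val < m + len → a i = aS i),
      uniformMixture (merminStrategy xstar astar) x a
    = ∑ a ∈ univ.filter
        (fun a : Fin n → Bool => ∀ i : Fin n, m ≤ i.val → i.val < m + len → a i = aS i),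
      uniformMixture (merminStrategy xstar astar) x' a := by
  set c := (flipsBefore xstar x m).bodd ^^ (flipsBefore xstar x' m).bodd
  refine sum_finset_uniformMixture_eq_of_perm _ x
    (Function.Involutive.toPerm (· ^^ c) fun r => by simp) fun r => ?_
  simp only [mem_filter, mem_univ, true_and]
  refine forall_congr' fun i => imp_congr_right fun hmi => imp_congr_right fun hil => ?_
  rw [merminStrategy_eq_of_eqOn_window hx r hmi hil]
  rfl

end MerminStrategy

theorem exists_causal_box_mermin_deterministic
    (n : ℕ)
    (xstar : Fin n → Bool)
    (hxstar : ∃ kstar : ℕ,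
      (Finset.univ.filter (fun i => xstar i = true)).card + 2 * kstar = n) :
    ∃ (P : (Fin n → Bool) → (Fin n → Bool) → ℝ) (astar : Fin n → Bool),
      -- n-party box: P x a is the probability of outputs a given inputs x
      (∀ x a, 0 ≤ P x a) ∧
      (∀ x, ∑ a, P x a = 1) ∧
      -- (i) contiguous-subset relativistic causality constraints:
      -- for every contiguous set S = {m, …, m+len−1} with 1 ≤ len ≤ n−1,
      -- the marginal of the outputs in S is independent of the inputs outside S
      (∀ (m len : ℕ), 1 ≤ len → len ≤ n - 1 → m + len ≤ n →
        ∀ (x x' : Fin n → Bool),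
          (∀ i : Fin n, m ≤ i.val → i.val < m + len → x i = x' i) →
          ∀ aS : Fin n → Bool,
            ∑ a ∈ Finset.univ.filter
                (fun a : Fin n → Bool =>
                  ∀ i : Fin n, m ≤ i.val → i.val < m + len → a i = aS i),
              P x a
            = ∑ a ∈ Finset.univ.filter
                (fun a : Fin n → Bool =>
                  ∀ i : Fin n, m ≤ i.val → i.val < m + len → a i = aS i),
              P x' a) ∧
      -- (ii) maximal Mermin violation: ⟨x⟩ = (−1)^k whenever Σᵢ xᵢ = n − 2k
      (∀ (x : Fin n → Bool) (k : ℕ),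
        (Finset.univ.filter (fun i => x i = true)).card + 2 * k = n →
        ∑ a, ((-1 : ℝ) ^ (Finset.univ.filter (fun i => a i = true)).card) * P x a
          = (-1 : ℝ) ^ k) ∧
      -- (iii) deterministic output on input x*
      P xstar astar = 1 := by
  obtain ⟨kstar, hkstar⟩ := hxstar
  set astar : Fin n → Bool := fun i => decide (i.val < kstar)
  have hastar : #{i | astar i} = kstar := by
    simp only [astar, decide_eq_true_eq, Fin.card_filter_val_lt]
    omega
  refine ⟨uniformMixture (merminStrategy xstar astar), astar, uniformMixture_nonneg _,
    fun x => sum_uniformMixture _ x, fun m len _ _ _ x x' hx aS =>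
      sum_filter_uniformMixture_merminStrategy_eq_of_eqOn_window hx aS,
    fun x k hk => ?_, uniformMixture_eq_one _ _ (merminStrategy_self xstar astar)⟩
  simp only [sum_mul_uniformMixture, Fintype.card_bool,
    (card_merminStrategy_modEq hastar hk hkstar _).neg_one_pow, sum_const, card_univ]
  ring
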